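/- arXiv:1502.07467 — 4 statements merged into one kernel-verified Lean document; each statement's English description precedes it below -/
import Mathlib

section
/- Let A be an n×m matrix over a field F and let K be its kernel. Let B be a basis of F^m such that every vector v in B \ K is i-unique for some i (i.e., (Av)_i ≠ 0 but (Aw)_i = 0 for every other w in B). Then rank(A) = m − |B ∩ K|. -/
/-! Each image under `A` of a vector of `B` outside `K` has a coordinate at which all other images
vanish, so these images are linearly independent; they span the range of `A`, hence
`rank A = |B \ K| = m - |B ∩ K|`. -/

open Module Submodule

theorem linearIndepOn_of_forall_exists_private_coord {ι κ R : Type*} [Ring R]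
    [NoZeroDivisors R] {u : ι → κ → R} {s : Set ι}
    (h : ∀ j ∈ s, ∃ i, u j i ≠ 0 ∧ ∀ j' ∈ s, j' ≠ j → u j' i = 0) :
    LinearIndepOn R u s := by
  classical
  rw [LinearIndepOn, linearIndependent_iff']
  intro t g hsum j hj
  obtain ⟨i, hi, hothers⟩ := h j j.2
  have hcoord : ∑ j' ∈ t, g j' * u j' i = 0 := by
    simpa using congrFun hsum i
  rw [Finset.sum_eq_single j (fun j' _ hne => by
    rw [hothers j' j'.2 (Subtype.coe_ne_coe.mpr hne), mul_zero]) (by simp [hj])] at hcoord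
  exact (mul_eq_zero.mp hcoord).resolve_right hi

theorem LinearMap.finrank_range_eq_ncard_sdiff_ker {F V W : Type*} [DivisionRing F]
    [AddCommGroup V] [Module F V] [AddCommGroup W] [Module F W]
    (f : V →ₗ[F] W) {B : Set V} (hB : B.Finite) (hspan : span F B = ⊤)
    (hli : LinearIndepOn F f (B \ LinearMap.ker f)) :
    finrank F (LinearMap.range f) = (B \ LinearMap.ker f).ncard := by
  have hrange : LinearMap.range f = span F (f '' (B \ LinearMap.ker f)) := by
    rw [LinearMap.range_eq_map, ← hspan, map_span, ← span_sdiff_singleton_zero]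
    congr 1
    exact (Set.image_sdiff_preimage ..).symm
  have : Fintype ↥(B \ LinearMap.ker f) := (hB.sdiff).fintype
  rw [hrange, Set.image_eq_range, finrank_span_eq_card hli.linearIndependent,
    Fintype.card_eq_nat_card, Nat.card_coe_set_eq]

theorem LinearIndepOn.ncard_eq_finrank {F V : Type*} [DivisionRing F] [AddCommGroup V] [Module F V]
    {B : Set V} (hli : LinearIndepOn F id B) (hspan : span F B = ⊤) :
    B.ncard = finrank F V := by
  rw [finrank_eq_nat_card_basis (Basis.mk hli (by simpa using hspan.ge)),
    Nat.card_coe_set_eq]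

/-- If `B` is an `A`-good basis of `F^m` (every basis vector outside the kernel is
`i`-unique for some `i`), then `rank(A) = m - |B ∩ K|` where `K` is the kernel of `A`. -/
theorem stmt_0 {F : Type*} [Field F] {n m : ℕ}
    (A : Matrix (Fin n) (Fin m) F) (B : Set (Fin m → F))
    (hBli : LinearIndependent F ((↑) : B → (Fin m → F)))
    (hBsp : Submodule.span F B = ⊤)
    (hgood : ∀ v ∈ B, A.mulVec v ≠ 0 →
      ∃ i, A.mulVec v i ≠ 0 ∧ ∀ w ∈ B, w ≠ v → A.mulVec w i = 0) :
    A.rank = m - (B ∩ {v | A.mulVec v = 0}).ncard := by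
  have hB : B.Finite := hBli.setFinite
  have hli : LinearIndepOn F A.mulVecLin (B \ LinearMap.ker A.mulVecLin) :=
    linearIndepOn_of_forall_exists_private_coord fun v hv => by
      obtain ⟨i, hi, hothers⟩ := hgood v hv.1 hv.2
      exact ⟨i, hi, fun w hw => hothers w hw.1⟩
  have hcard := Set.ncard_inter_add_ncard_sdiff_eq_ncard B (LinearMap.ker A.mulVecLin) hB
  rw [LinearIndepOn.ncard_eq_finrank hBli hBsp, finrank_fin_fun] at hcard
  rw [Matrix.rank, A.mulVecLin.finrank_range_eq_ncard_sdiff_ker hB hBsp hli]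
  change _ = m - (B ∩ LinearMap.ker A.mulVecLin).ncard
  omega
end

section
/- Let B be an A-good basis of F^m, where A has kernel K. Then B ∩ K is a basis of K. -/
/-!
Write `v ∈ K` as a combination `∑ c_b b` of elements of `B`. If some `b` with `c_b ≠ 0` had
`f b ≠ 0`, pick a coordinate `i` in which `b` is unique: then `0 = (f v)_i = c_b (f b)_i ≠ 0`.
So only kernel vectors of `B` occur, and `B ∩ K` spans `K`.
-/

namespace LinearMap

variable {R M N ι : Type*} [Semiring R] [AddCommMonoid M] [Module R M]
  [AddCommMonoid N] [Module R N]

def IsGoodSet (f : M →ₗ[R] ι → N) (B : Set M) : Prop :=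
  ∀ v ∈ B, f v ≠ 0 → ∃ i, f v i ≠ 0 ∧ ∀ w ∈ B, w ≠ v → f w i = 0

theorem apply_sum_apply_eq_smul_of_unique (f : M →ₗ[R] ι → N) {B : Set M} (c : M →₀ R)
    (hc : ↑c.support ⊆ B) {b : M} {i : ι} (hi : ∀ w ∈ B, w ≠ b → f w i = 0) :
    f (c.sum fun w r => r • w) i = c b • f b i := by
  simp only [Finsupp.sum, map_sum, map_smul, Finset.sum_apply, Pi.smul_apply]
  refine Finset.sum_eq_single b (fun w hw hwb => ?_) (fun hb => ?_)
  · rw [hi w (hc hw) hwb, smul_zero]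
  · rw [Finsupp.notMem_support_iff.mp hb, zero_smul]

theorem span_inter_ker_of_isGoodSet [NoZeroSMulDivisors R N] {f : M →ₗ[R] ι → N} {B : Set M}
    (hgood : f.IsGoodSet B) (hB : Submodule.span R B = ⊤) :
    Submodule.span R (B ∩ ker f) = ker f := by
  refine le_antisymm (Submodule.span_le.mpr Set.inter_subset_right) fun v hv => ?_
  obtain ⟨c, hcB, rfl⟩ := Submodule.mem_span_set.mp (hB.ge (Submodule.mem_top (x := v)))
  have hcK : ↑c.support ⊆ B ∩ ker f := by
    intro b hb
    refine ⟨hcB hb, ?_⟩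
    by_contra hfb
    obtain ⟨i, hbi, hi⟩ := hgood b (hcB hb) hfb
    have hcoord : c b • f b i = 0 := by
      rw [← apply_sum_apply_eq_smul_of_unique f c hcB hi, mem_ker.mp hv, Pi.zero_apply]
    exact (eq_zero_or_eq_zero_of_smul_eq_zero hcoord).elim (Finsupp.mem_support_iff.mp hb) hbi
  exact Submodule.mem_span_set.mpr ⟨c, hcK, rfl⟩

end LinearMap

/-- If `B` is an `A`-good basis of `F^m`, then `B ∩ K` is a basis of the kernel `K` of `A`. -/
theorem stmt_3 {F : Type*} [Field F] {n m : ℕ}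
    (A : Matrix (Fin n) (Fin m) F) (B : Set (Fin m → F))
    (hBli : LinearIndependent F ((↑) : B → (Fin m → F)))
    (hBsp : Submodule.span F B = ⊤)
    (hgood : ∀ v ∈ B, A.mulVec v ≠ 0 →
      ∃ i, A.mulVec v i ≠ 0 ∧ ∀ w ∈ B, w ≠ v → A.mulVec w i = 0) :
    LinearIndependent F ((↑) : (B ∩ {v | A.mulVec v = 0} : Set (Fin m → F)) → (Fin m → F)) ∧
      Submodule.span F (B ∩ {v | A.mulVec v = 0}) = LinearMap.ker A.mulVecLin :=
  ⟨LinearIndepOn.mono (v := id) hBli Set.inter_subset_left,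
    LinearMap.span_inter_ker_of_isGoodSet (f := A.mulVecLin) hgood hBsp⟩
end

section
/- Isolation Lemma: Let n, N ≥ 1 and let 𝓕 be a nonempty family of subsets of {1,…,n}. If a weight assignment w : {1,…,n} → {1,…,N} is chosen uniformly at random, then with probability at least 1 − n/N, there is a unique set F ∈ 𝓕 of minimum weight, where the weight of F is Σ_{i∈F} w(i). -/
/-!
Call `i` singular for a weighting `c` when some minimum-weight set of `𝓕` contains `i` and
another one does not; if the minimum-weight set is not unique, some `i` is singular. For a
singular `i`, the value `c i` is forced by the other weights: it is the least weight of a set of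
`𝓕` avoiding `i` minus the least weight of `F ∖ {i}` over the sets `F ∈ 𝓕` containing `i`.
So for each `i` at most a `1/N` fraction of the weightings makes `i` singular, and the union
bound over the `n` elements gives the probability `n/N` of non-uniqueness.
-/

open Finset

section Weights

variable {ι M : Type*}

def IsMinWeight [AddCommMonoid M] [LE M] (𝓕 : Finset (Finset ι)) (c : ι → M) (F : Finset ι) :
    Prop :=
  F ∈ 𝓕 ∧ ∀ G ∈ 𝓕, ∑ j ∈ F, c j ≤ ∑ j ∈ G, c j

def IsSingular [AddCommMonoid M] [LE M] (𝓕 : Finset (Finset ι)) (c : ι → M) (i : ι) : Prop :=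
  ∃ F G, IsMinWeight 𝓕 c F ∧ IsMinWeight 𝓕 c G ∧ i ∈ F ∧ i ∉ G

theorem exists_isSingular_of_not_existsUnique [AddCommMonoid M] [LinearOrder M] [DecidableEq ι]
    {𝓕 : Finset (Finset ι)} (h𝓕 : 𝓕.Nonempty) (c : ι → M) (h : ¬ ∃! F, IsMinWeight 𝓕 c F) :
    ∃ i, IsSingular 𝓕 c i := by
  obtain ⟨F, hF, hFmin⟩ := 𝓕.exists_min_image (fun F => ∑ j ∈ F, c j) h𝓕
  obtain ⟨G, hG, hGF⟩ : ∃ G, IsMinWeight 𝓕 c G ∧ G ≠ F := by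
    by_contra! hall
    exact h ⟨F, ⟨hF, hFmin⟩, hall⟩
  obtain ⟨i, hi⟩ := Finset.symmDiff_nonempty.2 hGF
  rcases Finset.mem_symmDiff.1 hi with ⟨hiG, hiF⟩ | ⟨hiF, hiG⟩
  · exact ⟨i, G, F, hG, ⟨hF, hFmin⟩, hiG, hiF⟩
  · exact ⟨i, F, G, ⟨hF, hFmin⟩, hG, hiF, hiG⟩

theorem IsSingular.apply_eq [AddCancelCommMonoid M] [LinearOrder M] [IsOrderedCancelAddMonoid M]
    [DecidableEq ι] {𝓕 : Finset (Finset ι)} {c c' : ι → M} {i : ι}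
    (hc : IsSingular 𝓕 c i) (hc' : IsSingular 𝓕 c' i) (hcc' : ∀ j ≠ i, c j = c' j) :
    c i = c' i := by
  obtain ⟨F, G, ⟨hF, hFmin⟩, ⟨hG, hGmin⟩, hiF, hiG⟩ := hc
  obtain ⟨F', G', ⟨hF', hFmin'⟩, ⟨hG', hGmin'⟩, hiF', hiG'⟩ := hc'
  have avoid : ∀ H : Finset ι, i ∉ H → ∑ j ∈ H, c' j = ∑ j ∈ H, c j := fun H hH =>
    sum_congr rfl fun j hj => (hcc' j (ne_of_mem_of_not_mem hj hH)).symm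
  have split : ∀ d : ι → M, (∀ j ≠ i, d j = c j) → ∀ H : Finset ι, i ∈ H →
      ∑ j ∈ H, d j = d i + ∑ j ∈ H.erase i, c j := fun d hd H hH => by
    rw [← add_sum_erase H d hH, sum_congr rfl fun j hj => hd j (ne_of_mem_erase hj)]
  have split_c := split c fun _ _ => rfl
  have split_c' := split c' fun j hj => (hcc' j hj).symm
  have hFF' : ∑ j ∈ F.erase i, c j = ∑ j ∈ F'.erase i, c j := by
    refine le_antisymm ?_ ?_
    · simpa only [split_c F hiF, split_c F' hiF', add_le_add_iff_left] using hFmin F' hF'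
    · simpa only [split_c' F hiF, split_c' F' hiF', add_le_add_iff_left] using hFmin' F hF
  have hGG' : ∑ j ∈ G, c j = ∑ j ∈ G', c j := by
    refine le_antisymm (hGmin G' hG') ?_
    simpa only [avoid G hiG, avoid G' hiG'] using hGmin' G hG
  have hFG : ∑ j ∈ F, c j = ∑ j ∈ G, c j := le_antisymm (hFmin G hG) (hGmin F hF)
  have hFG' : ∑ j ∈ F', c' j = ∑ j ∈ G', c' j := le_antisymm (hFmin' G' hG') (hGmin' F' hF')
  rw [split_c F hiF, hGG', ← avoid G' hiG', ← hFG', split_c' F' hiF', ← hFF'] at hFG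
  exact add_right_cancel hFG

end Weights

theorem card_mul_card_le_card_pow_of_apply_eq {ι α : Type*} [DecidableEq ι] [Fintype ι]
    [Fintype α] (S : Finset (ι → α)) (i : ι)
    (hS : ∀ w ∈ S, ∀ w' ∈ S, (∀ j ≠ i, w j = w' j) → w i = w' i) :
    Fintype.card α * #S ≤ Fintype.card α ^ Fintype.card ι := by
  rw [← Fintype.card_fun, ← card_univ, mul_comm, ← card_product]
  refine card_le_card_of_injOn (fun p => Function.update p.1 i p.2) (fun _ _ => mem_univ _) ?_
  rintro ⟨w, a⟩ hw ⟨w', a'⟩ hw' h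
  simp only [coe_product, Set.mem_prod, mem_coe] at hw hw'
  have ha : a = a' := by simpa using congrFun h i
  have hoff : ∀ j ≠ i, w j = w' j := fun j hj => by
    simpa [Function.update_of_ne hj] using congrFun h j
  have hwi := hS w hw.1 w' hw'.1 hoff
  refine Prod.ext (funext fun j => ?_) ha
  obtain rfl | hj := eq_or_ne j i
  exacts [hwi, hoff j hj]

open scoped Classical in
theorem card_mul_card_not_existsUnique_isMinWeight_le {ι α M : Type*} [DecidableEq ι]
    [Fintype ι] [Fintype α] [AddCancelCommMonoid M] [LinearOrder M] [IsOrderedCancelAddMonoid M]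
    {𝓕 : Finset (Finset ι)} (h𝓕 : 𝓕.Nonempty) {f : α → M} (hf : Function.Injective f) :
    Fintype.card α * #{w : ι → α | ¬ ∃! F, IsMinWeight 𝓕 (f ∘ w) F} ≤
      Fintype.card ι * Fintype.card α ^ Fintype.card ι := by
  let singular (i : ι) : Finset (ι → α) := {w | IsSingular 𝓕 (f ∘ w) i}
  have hsingular (i : ι) : Fintype.card α * #(singular i) ≤ Fintype.card α ^ Fintype.card ι :=
    card_mul_card_le_card_pow_of_apply_eq (singular i) i fun w hw w' hw' h =>
      hf <| (mem_filter.1 hw).2.apply_eq (mem_filter.1 hw').2 fun j hj => congrArg f (h j hj)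
  calc Fintype.card α * #{w : ι → α | ¬ ∃! F, IsMinWeight 𝓕 (f ∘ w) F}
      ≤ Fintype.card α * #(univ.biUnion singular) := by
        refine Nat.mul_le_mul_left _ (card_le_card fun w hw => ?_)
        obtain ⟨i, hi⟩ := exists_isSingular_of_not_existsUnique h𝓕 (f ∘ w) (mem_filter.1 hw).2
        exact mem_biUnion.2 ⟨i, mem_univ _, mem_filter.2 ⟨mem_univ _, hi⟩⟩
    _ ≤ ∑ i, Fintype.card α * #(singular i) := by
        rw [← mul_sum]; exact Nat.mul_le_mul_left _ card_biUnion_le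
    _ ≤ Fintype.card ι * Fintype.card α ^ Fintype.card ι :=
        (sum_le_sum fun i (_ : i ∈ univ) => hsingular i).trans_eq (by simp)

theorem one_sub_div_le_div_add {g b n N : ℕ} (hN : 0 < N) (hgb : 0 < g + b)
    (h : N * b ≤ n * (g + b)) : (1 : ℝ) - n / N ≤ g / (g + b : ℕ) := by
  have hN₀ : (0 : ℝ) < N := by exact_mod_cast hN
  have hgb₀ : (0 : ℝ) < (g + b : ℕ) := by exact_mod_cast hgb
  have h' : (N : ℝ) * b ≤ n * (g + b) := by exact_mod_cast h
  rw [sub_le_iff_le_add, div_add_div _ _ hgb₀.ne' hN₀.ne', le_div_iff₀ (by positivity), one_mul]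
  push_cast
  linarith

open scoped Classical in
theorem stmt_14_general {n N : ℕ} (hN : 1 ≤ N)
    (𝓕 : Finset (Finset (Fin n))) (h𝓕 : 𝓕.Nonempty) :
    (1 : ℝ) - (n : ℝ) / N ≤
      ((Finset.univ.filter (fun w : Fin n → Fin N =>
          ∃! F : Finset (Fin n), F ∈ 𝓕 ∧
            ∀ G ∈ 𝓕, ∑ i ∈ F, ((w i : ℕ) + 1) ≤ ∑ i ∈ G, ((w i : ℕ) + 1))).card : ℝ)
        / (N ^ n : ℕ) := by
  let weight (k : Fin N) : ℕ := k + 1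
  have hbad := card_mul_card_not_existsUnique_isMinWeight_le h𝓕 (f := weight)
    fun _ _ h => Fin.ext (Nat.succ_injective h)
  have htotal := card_filter_add_card_filter_not (s := univ)
    fun w : Fin n → Fin N => ∃! F, IsMinWeight 𝓕 (weight ∘ w) F
  simp only [Fintype.card_fin, card_univ, Fintype.card_fun] at hbad htotal
  rw [← htotal] at hbad ⊢
  exact one_sub_div_le_div_add hN (htotal ▸ Nat.pow_pos hN) hbad

open scoped Classical in
/-- Isolation Lemma: for a nonempty family `𝓕` of subsets of `{1,…,n}` and a uniformly
random weight assignment `w : {1,…,n} → {1,…,N}`, with probability at least `1 - n/N`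
the minimum-weight set of `𝓕` is unique. -/
theorem stmt_14 {n N : ℕ} (hn : 1 ≤ n) (hN : 1 ≤ N)
    (𝓕 : Finset (Finset (Fin n))) (h𝓕 : 𝓕.Nonempty) :
    (1 : ℝ) - (n : ℝ) / N ≤
      ((Finset.univ.filter (fun w : Fin n → Fin N =>
          ∃! F : Finset (Fin n), F ∈ 𝓕 ∧
            ∀ G ∈ 𝓕, ∑ i ∈ F, ((w i : ℕ) + 1) ≤ ∑ i ∈ G, ((w i : ℕ) + 1))).card : ℝ)
        / (N ^ n : ℕ) :=
  stmt_14_general hN 𝓕 h𝓕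
end

section
/- Tutte's theorem on the Tutte matrix: A finite simple undirected graph G on vertex set {1,…,n} has a perfect matching if and only if the determinant of its Tutte matrix T_G is a nonzero polynomial. -/
/-!
Expand `det T = ∑ σ, sign σ • ∏ i, T (σ i) i`. Because `T` is skew-symmetric, reversing an odd
cycle of `σ` keeps the sign of `σ` and negates the product; choosing the cycle from the set of
points on odd cycles, which reversal does not change, makes this an involution without fixed
points, so only permutations whose cycles are all even survive. A nonzero surviving term is a
permutation moving every vertex along an edge of `G` with only even cycles, and every other edge
of those cycles is a perfect matching. Conversely, evaluating `T` at the indicator of a perfect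
matching gives a signed permutation matrix, whose determinant is a unit.
-/

open Finset

namespace Equiv.Perm

variable {α : Type*}

theorem SameCycle.of_forall_sameCycle_apply {f g : Perm α} (h : ∀ y, g.SameCycle y (f y))
    {a b : α} (hab : f.SameCycle a b) : g.SameCycle a b := by
  obtain ⟨k, rfl⟩ := hab
  induction k using Int.induction_on with
  | zero => exact .refl g a
  | succ k ih =>
    rw [show f ^ ((k : ℤ) + 1) = f * f ^ (k : ℤ) by group, mul_apply]
    exact ih.trans (h _)
  | pred k ih =>
    rw [show f ^ (-(k : ℤ) - 1) = f⁻¹ * f ^ (-(k : ℤ)) by group, mul_apply]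
    refine ih.trans (.symm ?_)
    simpa using h (f⁻¹ ((f ^ (-(k : ℤ))) a))

variable [Fintype α] [DecidableEq α]

-- `σ = c * τ` with `c` the cycle through `x` commuting with `τ`, so this is `c⁻¹ * τ`.
def reverseCycle (σ : Perm α) (x : α) : Perm α :=
  (σ.cycleOf x)⁻¹ * (σ.cycleOf x)⁻¹ * σ

variable {σ : Perm α} {x : α}

theorem reverseCycle_apply (y : α) :
    σ.reverseCycle x y = if σ.SameCycle x y then σ⁻¹ y else σ y := by
  by_cases hy : σ.SameCycle x y <;>
    simp [reverseCycle, cycleOf_inv, cycleOf_apply, hy, sameCycle_inv]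

theorem sign_reverseCycle : sign (σ.reverseCycle x) = sign σ := by
  simp [reverseCycle, Int.units_mul_self]

theorem sameCycle_reverseCycle {a b : α} :
    (σ.reverseCycle x).SameCycle a b ↔ σ.SameCycle a b := by
  refine ⟨.of_forall_sameCycle_apply fun y => ?_, .of_forall_sameCycle_apply fun y => ?_⟩
  · rw [reverseCycle_apply]
    split_ifs
    · exact ⟨-1, by simp⟩
    · exact ⟨1, by simp⟩
  · by_cases hy : σ.SameCycle x y
    · refine .symm ⟨1, ?_⟩
      simp [reverseCycle_apply, sameCycle_apply_right.2 hy]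
    · refine ⟨1, ?_⟩
      simp [reverseCycle_apply, hy]

theorem reverseCycle_apply_eq_self_iff {y : α} : σ.reverseCycle x y = y ↔ σ y = y := by
  rw [reverseCycle_apply]
  split_ifs
  · rw [inv_eq_iff_eq, eq_comm]
  · rfl

theorem support_cycleOf_reverseCycle (y : α) :
    ((σ.reverseCycle x).cycleOf y).support = (σ.cycleOf y).support := by
  ext z
  rw [mem_support_cycleOf_iff, mem_support_cycleOf_iff, sameCycle_reverseCycle, mem_support,
    mem_support, Ne, reverseCycle_apply_eq_self_iff]

theorem cycleOf_reverseCycle_self : (σ.reverseCycle x).cycleOf x = (σ.cycleOf x)⁻¹ := by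
  ext y
  by_cases hy : σ.SameCycle x y <;>
    simp [cycleOf_apply, sameCycle_reverseCycle, hy, reverseCycle_apply, cycleOf_inv, sameCycle_inv]

theorem reverseCycle_reverseCycle : (σ.reverseCycle x).reverseCycle x = σ := by
  rw [reverseCycle, cycleOf_reverseCycle_self, reverseCycle]
  group

theorem reverseCycle_ne_self (h : Odd (σ.cycleOf x).support.card) : σ.reverseCycle x ≠ σ := by
  intro heq
  have hx : σ x ≠ x := support_cycleOf_nonempty.1 (card_pos.1 h.pos)
  have hsq : σ.cycleOf x ^ 2 = 1 := by
    rw [reverseCycle, mul_eq_right, ← mul_inv_rev, inv_eq_one] at heq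
    rw [sq, heq]
  have hdvd := orderOf_dvd_of_pow_eq_one hsq
  rw [(isCycle_cycleOf σ hx).orderOf] at hdvd
  have hle := Nat.le_of_dvd two_pos hdvd
  have hge := two_le_card_support_cycleOf_iff.2 hx
  obtain ⟨k, hk⟩ := h
  omega

theorem card_filter_sameCycle (hx : σ x ≠ x) :
    #{y | σ.SameCycle x y} = (σ.cycleOf x).support.card := by
  congr 1
  ext y
  simp [mem_support_cycleOf_iff' hx]

noncomputable def reverseOddCycle (σ : Perm α) : Perm α :=
  if h : ∃ x, Odd (σ.cycleOf x).support.card then σ.reverseCycle h.choose else σ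

theorem reverseOddCycle_eq (h : ∃ x, Odd (σ.cycleOf x).support.card) :
    σ.reverseOddCycle = σ.reverseCycle h.choose :=
  dif_pos h

theorem support_cycleOf_reverseOddCycle (y : α) :
    (σ.reverseOddCycle.cycleOf y).support = (σ.cycleOf y).support := by
  unfold reverseOddCycle
  split_ifs
  exacts [support_cycleOf_reverseCycle y, rfl]

theorem reverseOddCycle_reverseOddCycle (h : ∃ x, Odd (σ.cycleOf x).support.card) :
    σ.reverseOddCycle.reverseOddCycle = σ := by
  have choose_congr {p q : α → Prop} (hpq : p = q) (hp : ∃ x, p x) (hq : ∃ x, q x) :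
      hp.choose = hq.choose := by
    subst hpq; rfl
  have h' : ∃ x, Odd (σ.reverseOddCycle.cycleOf x).support.card := by
    simpa only [support_cycleOf_reverseOddCycle] using h
  rw [reverseOddCycle_eq h', choose_congr (by simp only [support_cycleOf_reverseOddCycle]) h' h,
    reverseOddCycle_eq h, reverseCycle_reverseCycle]

theorem exists_zmod_two_coloring (hfix : ∀ x, σ x ≠ x)
    (heven : ∀ x, Even (σ.cycleOf x).support.card) :
    ∃ c : α → ZMod 2, ∀ x, c (σ x) = c x + 1 := by
  -- `c x` is the parity of any `k` with `(σ ^ k) (base x) = x`; even cycle lengths make it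
  -- independent of `k`.
  let base (x : α) : α := (Quotient.mk (SameCycle.setoid σ) x).out
  have base_apply (x : α) : base (σ x) = base x :=
    congrArg Quotient.out (Quotient.sound (sameCycle_apply_left.2 (.refl σ x)))
  have parity_eq {y : α} {m n : ℤ} (h : (σ ^ m) y = (σ ^ n) y) : (m : ZMod 2) = n := by
    have hy : y ∈ (σ.cycleOf y).support := (mem_support_cycleOf_iff' (hfix y)).2 (.refl σ y)
    have hmod := ((isCycleOn_support_cycleOf σ y).zpow_apply_eq_zpow_apply hy).1 h
    exact (ZMod.intCast_eq_intCast_iff _ _ 2).2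
      (hmod.of_dvd (Int.natCast_dvd_natCast.2 (even_iff_two_dvd.1 (heven y))))
  choose k hk using fun x => (Quotient.mk_out (s := SameCycle.setoid σ) x)
  replace hk (x : α) : (σ ^ k x) (base x) = x := hk x
  refine ⟨fun x => (k x : ZMod 2), fun x => ?_⟩
  have h : (σ ^ k (σ x)) (base x) = (σ ^ (k x + 1)) (base x) := by
    rw [← base_apply, hk, add_comm, zpow_one_add, mul_apply, base_apply, hk]
  simpa using parity_eq h

end Equiv.Perm

namespace Matrix

open Equiv Perm

variable {α R : Type*} [Fintype α] [DecidableEq α] [CommRing R] {M : Matrix α α R}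

theorem prod_reverseCycle (hM : Mᵀ = -M) (σ : Perm α) (x : α) :
    ∏ i, M (σ.reverseCycle x i) i = (-1) ^ #{y | σ.SameCycle x y} * ∏ i, M (σ i) i := by
  set s : Finset α := {y | σ.SameCycle x y}
  have hskew (a b : α) : M a b = -M b a := by simpa using congrFun (congrFun hM b) a
  have hout : ∏ i ∈ sᶜ, M (σ.reverseCycle x i) i = ∏ i ∈ sᶜ, M (σ i) i :=
    prod_congr rfl fun i hi => by rw [reverseCycle_apply, if_neg (by simpa [s] using hi)]
  have hin : ∏ i ∈ s, M (σ.reverseCycle x i) i = ∏ i ∈ s, M i (σ i) := by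
    rw [prod_congr rfl fun i hi => by rw [reverseCycle_apply, if_pos (mem_filter.1 hi).2]]
    exact (prod_equiv σ (by simp [s, sameCycle_apply_right]) (by simp)).symm
  rw [← prod_mul_prod_compl s, ← prod_mul_prod_compl s (fun i => M (σ i) i), hout, hin,
    prod_congr rfl fun i _ => hskew i (σ i), prod_neg]
  ring

theorem sum_odd_cycles_eq_zero (hM : Mᵀ = -M) :
    ∑ σ : Perm α with ∃ x, Odd (σ.cycleOf x).support.card,
      sign σ • ∏ i, M (σ i) i = 0 := by
  refine sum_involution (fun σ _ => σ.reverseOddCycle) (fun σ hσ => ?_) (fun σ hσ _ => ?_)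
    (fun σ hσ => ?_) (fun σ hσ => reverseOddCycle_reverseOddCycle (mem_filter.1 hσ).2)
  all_goals have h := (mem_filter.1 hσ).2
  · have hx := support_cycleOf_nonempty.1 (card_pos.1 h.choose_spec.pos)
    rw [reverseOddCycle_eq h, sign_reverseCycle, prod_reverseCycle hM, card_filter_sameCycle hx,
      h.choose_spec.neg_one_pow, neg_one_mul, smul_neg, add_neg_cancel]
  · rw [reverseOddCycle_eq h]
    exact reverseCycle_ne_self h.choose_spec
  · simpa [support_cycleOf_reverseOddCycle] using h

-- A fixed point `x` has `σ.cycleOf x = 1` with empty support, so it counts as an even cycle here.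
theorem det_eq_sum_even_cycles_of_transpose_eq_neg (hM : Mᵀ = -M) :
    M.det = ∑ σ : Perm α with ∀ x, Even (σ.cycleOf x).support.card,
      sign σ • ∏ i, M (σ i) i := by
  rw [det_apply, ← sum_filter_add_sum_filter_not univ
      (fun σ : Perm α => ∃ x, Odd (σ.cycleOf x).support.card),
    sum_odd_cycles_eq_zero hM, zero_add]
  simp only [not_exists, Nat.not_odd_iff_even]

end Matrix

namespace SimpleGraph

section

open Equiv

variable {V : Type*} {G : SimpleGraph V}

theorem Subgraph.IsPerfectMatching.exists_perm {M : G.Subgraph} (hM : M.IsPerfectMatching) :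
    ∃ σ : Perm V, ∀ v w, M.Adj v w ↔ σ v = w := by
  choose m hm huniq using Subgraph.isPerfectMatching_iff.1 hM
  have hinv : Function.Involutive m := fun v => (huniq (m v) v (hm v).symm).symm
  exact ⟨hinv.toPerm m, fun v w => ⟨fun h => (huniq v w h).symm, fun h => h ▸ hm v⟩⟩

variable [Fintype V] [DecidableEq V]

theorem exists_isPerfectMatching_of_perm (σ : Perm V) (hadj : ∀ v, G.Adj v (σ v))
    (heven : ∀ v, Even (σ.cycleOf v).support.card) :
    ∃ M : G.Subgraph, M.IsPerfectMatching := by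
  obtain ⟨c, hc⟩ := σ.exists_zmod_two_coloring (fun v => (hadj v).ne') heven
  have hσ (v : V) : c v = 0 ↔ c (σ v) = 1 := by rw [hc, add_eq_right]
  obtain ⟨M, hverts, hM⟩ := Subgraph.IsMatching.exists_of_disjoint_sets_of_equiv
    (s := {v | c v = 0}) (t := {v | c v = 1})
    (Set.disjoint_left.2 fun v h0 h1 => by simp_all) (σ.subtypeEquiv hσ) (fun v => hadj v)
  refine ⟨M, hM, fun v => ?_⟩
  rw [hverts]
  exact (by decide : ∀ z : ZMod 2, z = 0 ∨ z = 1) (c v)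

end

section

open Equiv Matrix

variable {V : Type*} [LinearOrder V] (R : Type*) [CommRing R] (G : SimpleGraph V)
  [DecidableRel G.Adj]

noncomputable def tutteMatrix : Matrix V V (MvPolynomial (V × V) R) :=
  Matrix.of fun i j =>
    if G.Adj i j then (if i < j then MvPolynomial.X (i, j) else -MvPolynomial.X (j, i)) else 0

variable {R G}

theorem tutteMatrix_apply (i j : V) : G.tutteMatrix R i j =
    if G.Adj i j then (if i < j then MvPolynomial.X (i, j) else -MvPolynomial.X (j, i)) else 0 :=
  rfl

theorem transpose_tutteMatrix : (G.tutteMatrix R)ᵀ = -G.tutteMatrix R := by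
  ext i j : 1
  simp only [transpose_apply, Matrix.neg_apply, tutteMatrix_apply, G.adj_comm j i]
  by_cases hadj : G.Adj i j
  · rcases lt_trichotomy i j with h | rfl | h
    · simp [hadj, h, h.not_gt]
    · exact (G.irrefl hadj).elim
    · simp [hadj, h, h.not_gt]
  · simp [hadj]

theorem adj_of_tutteMatrix_ne_zero {i j : V} (h : G.tutteMatrix R i j ≠ 0) : G.Adj i j := by
  by_contra hadj
  exact h (by rw [tutteMatrix_apply, if_neg hadj])

variable [Fintype V]

theorem det_tutteMatrix_ne_zero [Nontrivial R] {M : G.Subgraph} (hM : M.IsPerfectMatching) :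
    (G.tutteMatrix R).det ≠ 0 := by
  obtain ⟨σ, hσ⟩ := hM.exists_perm
  -- Setting `X (i, j) := 1` on the edges `i → σ i` and `0` elsewhere turns the Tutte matrix
  -- into a signed permutation matrix.
  let φ := MvPolynomial.eval (R := R) fun p : V × V => if σ p.1 = p.2 then 1 else 0
  have hφ : φ.mapMatrix (G.tutteMatrix R) =
      (Matrix.diagonal fun j => if σ j < j then (1 : R) else -1).submatrix σ id := by
    ext i j
    have hσσ (v : V) : σ (σ v) = v := (hσ _ _).1 ((hσ v (σ v)).2 rfl).symm
    by_cases hij : σ i = j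
    · subst hij
      simp only [RingHom.mapMatrix_apply, map_apply, tutteMatrix_apply,
        if_pos (M.adj_sub ((hσ _ _).2 rfl)), submatrix_apply, id, diagonal_apply_eq, hσσ]
      split_ifs <;> simp [φ, hσσ]
    · have hji : σ j ≠ i := fun h => hij (h ▸ hσσ j)
      simp only [RingHom.mapMatrix_apply, map_apply, tutteMatrix_apply, submatrix_apply, id,
        diagonal_apply_ne _ hij]
      split_ifs <;> simp [φ, hij, hji]
  have hunit : IsUnit (φ (G.tutteMatrix R).det) := by
    rw [RingHom.map_det, hφ, det_permute, det_diagonal]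
    refine ((Perm.sign σ).isUnit.map (Int.castRingHom R)).mul (IsUnit.prod_iff.2 fun i _ => ?_)
    split_ifs
    exacts [isUnit_one, isUnit_one.neg]
  exact fun h => hunit.ne_zero (by rw [h, map_zero])

theorem exists_isPerfectMatching_of_det_tutteMatrix_ne_zero (h : (G.tutteMatrix R).det ≠ 0) :
    ∃ M : G.Subgraph, M.IsPerfectMatching := by
  rw [det_eq_sum_even_cycles_of_transpose_eq_neg transpose_tutteMatrix] at h
  obtain ⟨σ, hσ, hterm⟩ := exists_ne_zero_of_sum_ne_zero h
  have hentry (v : V) : G.tutteMatrix R (σ v) v ≠ 0 := fun h0 => hterm <| by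
    rw [prod_eq_zero (f := fun i => G.tutteMatrix R (σ i) i) (mem_univ v) h0, smul_zero]
  exact exists_isPerfectMatching_of_perm σ
    (fun v => (adj_of_tutteMatrix_ne_zero (hentry v)).symm) (mem_filter.1 hσ).2

end

end SimpleGraph

/-- Tutte's theorem: a finite simple graph has a perfect matching iff the determinant
of its Tutte matrix is a nonzero polynomial. -/
theorem stmt_16 {n : ℕ} (G : SimpleGraph (Fin n)) [DecidableRel G.Adj]
    (T : Matrix (Fin n) (Fin n) (MvPolynomial (Fin n × Fin n) ℚ))
    (hT : T = Matrix.of fun i j =>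
      if G.Adj i j then
        (if i < j then MvPolynomial.X (i, j) else - MvPolynomial.X (j, i))
      else 0) :
    (∃ M : G.Subgraph, M.IsPerfectMatching) ↔ T.det ≠ 0 := by
  subst hT
  exact ⟨fun ⟨_, hM⟩ => SimpleGraph.det_tutteMatrix_ne_zero hM,
    SimpleGraph.exists_isPerfectMatching_of_det_tutteMatrix_ne_zero⟩
end
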